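/- Let H be an ℵ₀-monoid that admits a braiding element x such that H = ⟨add(x)⟩_{ℵ₀}. If ℵ₀·x = n·x for some finite n, then H = add(x), i.e., every element of H is a summand of a finite multiple of x. -/

import Mathlib

/-!
Write `h = ∑ fᵢ` with `fᵢ + zᵢ = kᵢ·x` and `kᵢ ≥ 1`. Summing the two families together gives
`h + ∑ zᵢ = ∑ kᵢ·x`, a countable sum of infinitely many copies of `x` laid out on an infinite,
co-infinite subset of `ℕ × ℕ`. Any two such subsets are exchanged by a permutation of `ℕ × ℕ`, so this
sum is `ℵ₀·x = n·x`, and `n·x = (n + 1)·x` because `x + ℵ₀·x = ℵ₀·x`.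
-/

/-- An ℵ₀-monoid: a set with 0 and a countable summation map satisfying (A1) and (A2). -/
structure AlephMonoid (H : Type*) where
  zero : H
  sum : (ℕ → H) → H
  a1 : ∀ x : ℕ → H, (∀ i, i ≠ 0 → x i = zero) → sum x = x 0
  a2 : ∀ (x : ℕ × ℕ → H) (π : ℕ × ℕ ≃ ℕ),
    sum (fun i => sum (fun j => x (i, j))) = sum (fun k => x (π.symm k))

namespace AlephMonoid

variable {H : Type*}

/-- The induced binary addition. -/
def add (M : AlephMonoid H) (a b : H) : H :=
  M.sum (fun i => if i = 0 then a else if i = 1 then b else M.zero)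

/-- ℵ₀·a : the countable sum of copies of `a`. -/
def infMul (M : AlephMonoid H) (a : H) : H := M.sum (fun _ => a)

/-- n·a : finite multiples. -/
def nsmul (M : AlephMonoid H) : ℕ → H → H
  | 0, _ => M.zero
  | n + 1, a => M.add a (M.nsmul n a)

/-- `y ∈ add(x)` : `y` is a direct summand of a finite multiple of `x`. -/
def inAdd (M : AlephMonoid H) (x y : H) : Prop :=
  ∃ z : H, ∃ n : ℕ, 1 ≤ n ∧ M.add y z = M.nsmul n x

/-- Multiplication by a cardinal α with 0 ≤ α ≤ ℵ₀ (`none` stands for ℵ₀). -/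
def cmul (M : AlephMonoid H) : Option ℕ → H → H
  | some n, a => M.nsmul n a
  | none, a => M.infMul a

/-- The finite sum `Σ_{i=a}^{b} f i`, expressed via the countable sum of a
family supported on the interval `[a, b]`. -/
def intervalSum (M : AlephMonoid H) (f : ℕ → H) (a b : ℕ) : H :=
  M.sum (fun i => if a ≤ i ∧ i ≤ b then f i else M.zero)

end AlephMonoid

namespace AlephMonoid

variable {H : Type*} (M : AlephMonoid H)

theorem sum_zero : M.sum (fun _ => M.zero) = M.zero :=
  M.a1 _ fun _ _ => rfl

theorem sum_sum_comp_perm (y : ℕ × ℕ → H) (ρ : Equiv.Perm (ℕ × ℕ)) :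
    M.sum (fun i => M.sum fun j => y (ρ (i, j))) = M.sum fun i => M.sum fun j => y (i, j) := by
  rw [M.a2 (fun p => y (ρ p)) (ρ.trans Nat.pairEquiv), M.a2 y Nat.pairEquiv]
  simp

theorem sum_sum_ite_eq_zero (f : ℕ → H) :
    M.sum (fun i => M.sum fun j => if j = 0 then f i else M.zero) = M.sum f := by
  congr 1
  funext i
  exact M.a1 _ fun j hj => if_neg hj

/-- Fixes row `0`, moves row `1` into column `0` below `(0, 0)`, and rows `≥ 2` onto the rest. -/
def consPerm : Equiv.Perm (ℕ × ℕ) where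
  toFun
    | (0, j) => (0, j)
    | (1, j) => (j + 1, 0)
    | (i + 2, j) => (i + 1, j + 1)
  invFun
    | (0, j) => (0, j)
    | (j + 1, 0) => (1, j)
    | (i + 1, j + 1) => (i + 2, j)
  left_inv p := by rcases p with ⟨_ | _ | i, _ | j⟩ <;> rfl
  right_inv p := by rcases p with ⟨_ | i, _ | j⟩ <;> rfl

theorem add_sum (a : H) (g : ℕ → H) :
    M.add a (M.sum g) = M.sum fun i => if i = 0 then a else g (i - 1) := by
  rw [← M.sum_sum_ite_eq_zero (fun i => if i = 0 then a else g (i - 1)), add]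
  refine Eq.trans ?_ (M.sum_sum_comp_perm
    (fun p => if p.2 = 0 then if p.1 = 0 then a else g (p.1 - 1) else M.zero) consPerm)
  congr 1
  funext i
  match i with
  | 0 => exact ((M.a1 _ fun j hj => by simp [consPerm, hj]).trans (by simp [consPerm])).symm
  | 1 => simp [consPerm]
  | i + 2 => simpa [consPerm] using M.sum_zero.symm

theorem add_infMul_self (x : H) : M.add x (M.infMul x) = M.infMul x := by
  rw [infMul, add_sum]
  simp

theorem nsmul_eq_sum (x : H) (n : ℕ) :
    M.nsmul n x = M.sum fun j => if j < n then x else M.zero := by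
  induction n with
  | zero => simpa [nsmul] using M.sum_zero.symm
  | succ n ih =>
    rw [nsmul, ih, add_sum]
    congr 1
    funext j
    cases j <;> simp

theorem sum_add (f g : ℕ → H) :
    M.sum (fun i => M.add (f i) (g i)) = M.add (M.sum f) (M.sum g) := by
  refine (M.sum_sum_comp_perm (fun p => if p.1 = 0 then f p.2 else if p.1 = 1 then g p.2 else M.zero)
    (Equiv.prodComm ℕ ℕ)).trans ?_
  congr 1
  funext i
  match i with
  | 0 | 1 => rfl
  | i + 2 => exact M.sum_zero

/-- A permutation of `ℕ × ℕ` carries `A` onto column `0`. -/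
theorem sum_sum_ite_mem_eq_infMul (x : H) {A : Set (ℕ × ℕ)} [DecidablePred (· ∈ A)]
    (hA : A.Infinite) (hAc : Aᶜ.Infinite) :
    M.sum (fun i => M.sum fun j => if (i, j) ∈ A then x else M.zero) = M.infMul x := by
  let B : Set (ℕ × ℕ) := {p | p.2 = 0}
  have hB : B.Infinite := Set.infinite_of_injective_forall_mem (f := fun i => (i, 0))
    (fun _ _ h => congrArg Prod.fst h) fun _ => rfl
  have hBc : Bᶜ.Infinite := Set.infinite_of_injective_forall_mem (f := fun j => (0, j + 1))
    (fun _ _ h => Nat.succ_injective (congrArg Prod.snd h)) fun _ => Nat.succ_ne_zero _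
  have := hA.to_subtype
  have := hAc.to_subtype
  have := hB.to_subtype
  have := hBc.to_subtype
  let eA : A ≃ B := nonempty_equiv_of_countable.some
  let eAc : ↥Aᶜ ≃ ↥Bᶜ := nonempty_equiv_of_countable.some
  let ρ : Equiv.Perm (ℕ × ℕ) := Equiv.subtypeCongr eA eAc
  have hρ (p : ℕ × ℕ) : ρ p ∈ B ↔ p ∈ A := by
    by_cases hp : p ∈ A
    · simp [ρ, Equiv.subtypeCongr, Equiv.sumCompl_symm_apply_of_pos hp, hp]
    · simp [ρ, Equiv.subtypeCongr, Equiv.sumCompl_symm_apply_of_neg hp, hp, ← Set.mem_compl_iff]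
  calc M.sum (fun i => M.sum fun j => if (i, j) ∈ A then x else M.zero)
      = M.sum (fun i => M.sum fun j => if ρ (i, j) ∈ B then x else M.zero) := by simp only [hρ]
    _ = M.sum (fun i => M.sum fun j => if j = 0 then x else M.zero) :=
      M.sum_sum_comp_perm (fun p => if p ∈ B then x else M.zero) ρ
    _ = M.infMul x := M.sum_sum_ite_eq_zero _

theorem sum_nsmul_eq_infMul (x : H) (k : ℕ → ℕ) (hk : ∀ i, 1 ≤ k i) :
    M.sum (fun i => M.nsmul (k i) x) = M.infMul x := by
  let A : Set (ℕ × ℕ) := {p | p.2 < k p.1}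
  have hA : A.Infinite := Set.infinite_of_injective_forall_mem (f := fun i => (i, 0))
    (fun _ _ h => congrArg Prod.fst h) hk
  have hAc : Aᶜ.Infinite := Set.infinite_of_injective_forall_mem (f := fun j => (0, k 0 + j))
    (fun _ _ h => Nat.add_left_cancel (congrArg Prod.snd h)) fun j => by simp [A]
  simp only [nsmul_eq_sum]
  exact M.sum_sum_ite_mem_eq_infMul x hA hAc

theorem inAdd_sum {x : H} {n : ℕ} (hn : M.infMul x = M.nsmul n x) {f : ℕ → H}
    (hf : ∀ i, M.inAdd x (f i)) : M.inAdd x (M.sum f) := by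
  choose z k hk hfz using hf
  refine ⟨M.sum z, n + 1, n.succ_pos, ?_⟩
  calc M.add (M.sum f) (M.sum z) = M.sum fun i => M.nsmul (k i) x := by
        rw [← sum_add]
        simp only [hfz]
    _ = M.infMul x := M.sum_nsmul_eq_infMul x k hk
    _ = M.add x (M.infMul x) := (M.add_infMul_self x).symm
    _ = M.nsmul (n + 1) x := by rw [hn]; rfl

end AlephMonoid

theorem eq_add_of_infMul_eq_nsmul_general {H : Type*} (M : AlephMonoid H) (x : H)
    (hgen : ∀ h : H, ∃ f : ℕ → H, (∀ i, M.inAdd x (f i)) ∧ h = M.sum f)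
    (n : ℕ) (hn : M.infMul x = M.nsmul n x) :
    ∀ h : H, M.inAdd x h := by
  intro h
  obtain ⟨f, hf, rfl⟩ := hgen h
  exact M.inAdd_sum hn hf

/-- if H admits a braiding element x with H = ⟨add(x)⟩_{ℵ₀}
and ℵ₀·x = n·x for some finite n, then H = add(x). -/
theorem eq_add_of_infMul_eq_nsmul {H : Type*} (M : AlephMonoid H) (x : H)
    (hbraid : ∀ x' y' : ℕ → H, (∀ i, M.inAdd x (x' i)) → (∀ i, M.inAdd x (y' i)) →
      M.sum x' = M.sum y' →
      ∃ (m n : ℕ → ℕ) (u v : ℕ → H),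
        m 0 = 0 ∧ StrictMono m ∧ StrictMono n ∧
        (∀ j, M.inAdd x (u j)) ∧ (∀ j, M.inAdd x (v j)) ∧
        v 0 = x' 0 ∧
        M.intervalSum y' 0 (n 0) = M.add (v 0) (u 0) ∧
        (∀ j, M.intervalSum x' (m j + 1) (m (j + 1)) = M.add (u j) (v (j + 1))) ∧
        (∀ j, M.intervalSum y' (n j + 1) (n (j + 1)) = M.add (u (j + 1)) (v (j + 1))))
    (hgen : ∀ h : H, ∃ f : ℕ → H, (∀ i, M.inAdd x (f i)) ∧ h = M.sum f)
    (n : ℕ) (hn : M.infMul x = M.nsmul n x) :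
    ∀ h : H, M.inAdd x h :=
  eq_add_of_infMul_eq_nsmul_general M x hgen n hn
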